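/- Let A > 0, n ≥ 1, x ∈ [0,A]^n, and let Y_1,…,Y_n be independent Poisson random variables with rates x_1,…,x_n. Let u ∈ ℝ^n satisfy ∑_{i=1}^n u_i² = 1 (hence |u_i| ≤ 1 for all i), and let 0 < μ ≤ 3/2. Then E[ exp( μ·∑_{i=1}^n u_i (Y_i − x_i) ) ] ≤ exp( μ²·A ). -/

import Mathlib

/-!
The moment generating function of a centred Poisson variable of rate `r` is
`exp (r (eᵗ - 1 - t))`, and `eˢ - 1 - s ≤ s²` for `|s| ≤ 3/2`. By independence the
MGF of `μ ∑ uᵢ (Yᵢ - xᵢ)` is the product of these, so its logarithm is at most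
`∑ xᵢ μ² uᵢ² ≤ A μ² ∑ uᵢ² = μ² A`, where `|μ uᵢ| ≤ 3/2` because `|uᵢ| ≤ 1`.
-/

open MeasureTheory

/-- The Poisson measure with rate `x`, viewed as a measure on ℝ supported on the
natural numbers: mass `e^{-x} x^k / k!` at each `k ∈ ℕ`. -/
noncomputable def poissonMeasureReal (x : ℝ) : Measure ℝ :=
  Measure.sum fun k : ℕ =>
    ENNReal.ofReal (Real.exp (-x) * x ^ k / (Nat.factorial k)) • Measure.dirac (k : ℝ)

open ProbabilityTheory Real
open scoped NNReal Nat

lemma poissonMeasureReal_eq_map_cast (r : ℝ≥0) : poissonMeasureReal r = Po(ℝ, r) := by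
  rw [poissonMeasureReal, poissonMeasure, Measure.map_sum .of_discrete]
  simp_rw [Measure.map_smul, Measure.map_dirac' .of_discrete]

lemma integral_exp_mul_map_cast_poissonMeasure (r : ℝ≥0) (t : ℝ) :
    ∫ y, exp (t * y) ∂Po(ℝ, r) = exp (r * (exp t - 1)) := by
  rw [integral_map .of_discrete (by fun_prop), integral_poissonMeasure]
  calc ∑' k : ℕ, (exp (-r) * r ^ k / k ! : ℝ) • exp (t * k)
  _ = ∑' k : ℕ, exp (-r) * ((r * exp t) ^ k / k !) := by
      congr with k
      rw [smul_eq_mul, mul_pow, ← exp_nat_mul]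
      ring_nf
  _ = exp (r * (exp t - 1)) := by
      rw [tsum_mul_left, (NormedSpace.expSeries_div_hasSum_exp (r * exp t)).tsum_eq,
        ← exp_eq_exp_ℝ, ← exp_add]
      ring_nf

lemma integral_exp_mul_sub_rate_map_cast_poissonMeasure (r : ℝ≥0) (t : ℝ) :
    ∫ y, exp (t * (y - r)) ∂Po(ℝ, r) = exp (r * (exp t - 1 - t)) := by
  simp_rw [mul_sub, exp_sub, integral_div, integral_exp_mul_map_cast_poissonMeasure, ← exp_sub]
  ring_nf

/-- `Complex.exp_bound'` with `n = 2`: the constant `3 / 2` is what makes `|s| / 3 ≤ 1 / 2`. -/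
lemma Real.abs_exp_sub_one_sub_id_le_of_abs_le_three_halves {s : ℝ} (hs : |s| ≤ 3 / 2) :
    |exp s - 1 - s| ≤ s ^ 2 := by
  have hs' : ‖(s : ℂ)‖ / (Nat.succ 2) ≤ 1 / 2 := by
    rw [Complex.norm_real, norm_eq_abs]
    norm_num
    linarith
  have h := Complex.exp_bound' hs'
  norm_num [Finset.sum_range_succ] at h
  rw [← sub_sub] at h
  exact_mod_cast h

lemma abs_le_one_of_sum_sq_eq_one {ι : Type*} [Fintype ι] {u : ι → ℝ}
    (hu : ∑ i, u i ^ 2 = 1) (i : ι) : |u i| ≤ 1 := by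
  rw [← sq_le_one_iff_abs_le_one, ← hu]
  exact Finset.single_le_sum (fun j _ => sq_nonneg (u j)) (Finset.mem_univ i)

theorem poisson_projected_mgf_bound_general
    (A : ℝ) (n : ℕ)
    (x : Fin n → ℝ) (hx : ∀ i, x i ∈ Set.Icc (0:ℝ) A)
    (u : Fin n → ℝ) (hu : ∑ i, (u i) ^ 2 = 1)
    (μ : ℝ) (hμ0 : 0 < μ) (hμ : μ ≤ 3 / 2) :
    (∫ y, Real.exp (μ * ∑ i, u i * (y i - x i))
        ∂(Measure.pi fun i => poissonMeasureReal (x i)))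
      ≤ Real.exp (μ ^ 2 * A) := by
  lift x to Fin n → ℝ≥0 using fun i => (hx i).1
  have hs (i : Fin n) : |μ * u i| ≤ 3 / 2 := by
    rw [abs_mul, abs_of_pos hμ0]
    nlinarith [abs_le_one_of_sum_sq_eq_one hu i, abs_nonneg (u i)]
  have hterm (i : Fin n) : x i * (exp (μ * u i) - 1 - μ * u i) ≤ A * (μ * u i) ^ 2 :=
    calc x i * (exp (μ * u i) - 1 - μ * u i) ≤ x i * (μ * u i) ^ 2 :=
          mul_le_mul_of_nonneg_left
            (le_of_abs_le (abs_exp_sub_one_sub_id_le_of_abs_le_three_halves (hs i))) (x i).2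
      _ ≤ A * (μ * u i) ^ 2 := mul_le_mul_of_nonneg_right (hx i).2 (sq_nonneg _)
  simp_rw [poissonMeasureReal_eq_map_cast, Finset.mul_sum, ← mul_assoc, exp_sum]
  rw [integral_fintype_prod_eq_prod (fun i z => exp (μ * u i * (z - x i)))]
  simp_rw [integral_exp_mul_sub_rate_map_cast_poissonMeasure, ← exp_sum, exp_le_exp]
  calc ∑ i, x i * (exp (μ * u i) - 1 - μ * u i) ≤ ∑ i, A * (μ * u i) ^ 2 :=
        Finset.sum_le_sum fun i _ => hterm i
    _ = μ ^ 2 * A := by simp_rw [mul_pow, ← Finset.mul_sum, hu]; ring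

/-- Equations (41)–(43): moment generating function bound for the projected centred
Poisson noise: `E[exp(μ ∑ i, u i (Y i - x i))] ≤ exp(μ² A)` for `0 < μ ≤ 3/2`,
rates `x i ∈ [0, A]` and a unit vector `u`. -/
theorem poisson_projected_mgf_bound
    (A : ℝ) (hA : 0 < A) (n : ℕ) (hn : 1 ≤ n)
    (x : Fin n → ℝ) (hx : ∀ i, x i ∈ Set.Icc (0:ℝ) A)
    (u : Fin n → ℝ) (hu : ∑ i, (u i) ^ 2 = 1)
    (μ : ℝ) (hμ0 : 0 < μ) (hμ : μ ≤ 3 / 2) :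
    (∫ y, Real.exp (μ * ∑ i, u i * (y i - x i))
        ∂(Measure.pi fun i => poissonMeasureReal (x i)))
      ≤ Real.exp (μ ^ 2 * A) :=
  poisson_projected_mgf_bound_general A n x hx u hu μ hμ0 hμ
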